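/- Let A = a₀ + 𝐚 + 𝒜 + a₁₂₃I be a multivector in Cl(2,1) with a₊⁽²⁾ < 0 and a₋⁽²⁾ < 0, and assume a₀ + a₁₂₃ > √(-a₊⁽²⁾) and a₀ - a₁₂₃ > √(-a₋⁽²⁾). Define A₀₊ = (1/2)·(log(a₀ + a₁₂₃ + √(-a₊⁽²⁾)) + log(a₀ + a₁₂₃ - √(-a₊⁽²⁾))), A₀₋ = (1/2)·(log(a₀ - a₁₂₃ + √(-a₋⁽²⁾)) + log(a₀ - a₁₂₃ - √(-a₋⁽²⁾))), A₁₂₊ = (artanh(√(-a₊⁽²⁾)/(a₀ + a₁₂₃))/√(-a₊⁽²⁾))·(1 + I)·(𝐚 + 𝒜), A₁₂₋ = (artanh(√(-a₋⁽²⁾)/(a₀ - a₁₂₃))/√(-a₋⁽²⁾))·(1 - I)·(𝐚 + 𝒜), and L = (1/2)·(A₀₊ + A₀₋ + A₁₂₊ + A₁₂₋ + (A₀₊ - A₀₋)·I). Then exp L = A. -/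

import Mathlib

open Real CliffordAlgebra

noncomputable section

/-- The quadratic form of signature (2,1): `Q(x) = x₁² + x₂² - x₃²`. -/
def Q21 : QuadraticForm ℝ (Fin 3 → ℝ) := QuadraticMap.weightedSumSquares ℝ ![1, 1, -1]

/-- The real Clifford algebra Cl(2,1). -/
abbrev Cl21 := CliffordAlgebra Q21

/-- The canonical (module) topology on the finite-dimensional real algebra Cl(2,1). -/
instance : TopologicalSpace Cl21 := moduleTopology ℝ Cl21

/-- The orthonormal generators `e₁, e₂, e₃` (indexed here by `0, 1, 2`). -/
def e (i : Fin 3) : Cl21 := ι Q21 (Pi.single i 1)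

/-- The pseudoscalar `I = e₁e₂e₃`. -/
def I3 : Cl21 := e 0 * e 1 * e 2

/-- The exponential `exp M = ∑ₖ Mᵏ/k!` in Cl(2,1). -/
def expCl (M : Cl21) : Cl21 := ∑' n : ℕ, (n.factorial : ℝ)⁻¹ • M ^ n

/-- `atan2 y x` is the argument in `(-π, π]` of the complex number `x + iy`. -/
def atan2 (y x : ℝ) : ℝ := Complex.arg ⟨x, y⟩

/-- The real inverse hyperbolic tangent, for arguments of absolute value less than 1. -/
def artanh (x : ℝ) : ℝ := (1 / 2) * Real.log ((1 + x) / (1 - x))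







lemma hq : ∀ i : Fin 3, e i * e i = algebraMap ℝ Cl21 (![1,1,-1] i) := by
  intro i
  rw [e, CliffordAlgebra.ι_sq_scalar]
  congr 1
  fin_cases i <;>
    simp [Q21, QuadraticMap.weightedSumSquares_apply, Fin.sum_univ_three, Pi.single_apply]

lemma hswap : ∀ i j : Fin 3, i ≠ j → e i * e j = -(e j * e i) := by
  intro i j hij
  have h := CliffordAlgebra.ι_mul_ι_add_swap (Q := Q21) (Pi.single i 1) (Pi.single j 1)
  have hp : QuadraticMap.polar Q21 (Pi.single i 1) (Pi.single j 1) = 0 := by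
    fin_cases i <;> fin_cases j <;> simp_all <;>
      simp [QuadraticMap.polar, Q21, QuadraticMap.weightedSumSquares_apply,
        Fin.sum_univ_three, Pi.single_apply]
  rw [hp, map_zero] at h
  rw [e, e]
  linear_combination (norm := noncomm_ring) h

lemma e00 : e 0 * e 0 = 1 := by rw [hq]; simp
lemma e11 : e 1 * e 1 = 1 := by rw [hq]; simp
lemma e22 : e 2 * e 2 = -1 := by rw [hq]; simp
lemma e10 : e 1 * e 0 = -(e 0 * e 1) := hswap 1 0 (by decide)
lemma e20 : e 2 * e 0 = -(e 0 * e 2) := hswap 2 0 (by decide)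
lemma e21 : e 2 * e 1 = -(e 1 * e 2) := hswap 2 1 (by decide)
lemma e00' (x : Cl21) : e 0 * (e 0 * x) = x := by rw [← mul_assoc, e00, one_mul]
lemma e11' (x : Cl21) : e 1 * (e 1 * x) = x := by rw [← mul_assoc, e11, one_mul]
lemma e22' (x : Cl21) : e 2 * (e 2 * x) = -x := by rw [← mul_assoc, e22, neg_one_mul]
lemma e10' (x : Cl21) : e 1 * (e 0 * x) = -(e 0 * (e 1 * x)) := by
  rw [← mul_assoc, e10, neg_mul, mul_assoc]
lemma e20' (x : Cl21) : e 2 * (e 0 * x) = -(e 0 * (e 2 * x)) := by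
  rw [← mul_assoc, e20, neg_mul, mul_assoc]
lemma e21' (x : Cl21) : e 2 * (e 1 * x) = -(e 1 * (e 2 * x)) := by
  rw [← mul_assoc, e21, neg_mul, mul_assoc]

lemma I3sq : I3 * I3 = 1 := by
  simp only [I3, mul_assoc, e00, e11, e22, e10, e20, e21, e00', e11', e22', e10', e20', e21',
    mul_neg, neg_mul, mul_one, one_mul, neg_neg]

lemma I3e0 : I3 * e 0 = e 0 * I3 := by
  simp only [I3, mul_assoc, e00, e11, e22, e10, e20, e21, e00', e11', e22', e10', e20', e21',
    mul_neg, neg_mul, mul_one, one_mul, neg_neg]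

lemma FF (a1 a2 a3 a12 a13 a23 : ℝ) :
    (a1 • e 0 + a2 • e 1 + a3 • e 2 + (a12 • (e 0 * e 1) + a13 • (e 0 * e 2) + a23 • (e 1 * e 2))) *
    (a1 • e 0 + a2 • e 1 + a3 • e 2 + (a12 • (e 0 * e 1) + a13 • (e 0 * e 2) + a23 • (e 1 * e 2))) =
    (a1^2 + a2^2 - a3^2 - a12^2 + a13^2 + a23^2) • (1 : Cl21) +
    (2 * (a1 * a23 - a2 * a13 + a3 * a12)) • I3 := by
  simp only [I3, mul_add, add_mul, smul_mul_assoc, mul_smul_comm, smul_smul, mul_assoc,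
    e00, e11, e22, e10, e20, e21, e00', e11', e22', e10', e20', e21',
    mul_neg, neg_mul, mul_one, one_mul, neg_neg, smul_neg]
  module

lemma I3F (a1 a2 a3 a12 a13 a23 : ℝ) :
    I3 * (a1 • e 0 + a2 • e 1 + a3 • e 2 + (a12 • (e 0 * e 1) + a13 • (e 0 * e 2) + a23 • (e 1 * e 2))) =
    (a1 • e 0 + a2 • e 1 + a3 • e 2 + (a12 • (e 0 * e 1) + a13 • (e 0 * e 2) + a23 • (e 1 * e 2))) * I3 := by
  simp only [I3, mul_add, add_mul, smul_mul_assoc, mul_smul_comm, smul_smul, mul_assoc,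
    e00, e11, e22, e10, e20, e21, e00', e11', e22', e10', e20', e21',
    mul_neg, neg_mul, mul_one, one_mul, neg_neg, smul_neg]

instance : IsModuleTopology ℝ Cl21 := ⟨rfl⟩
instance : ContinuousAdd Cl21 := IsModuleTopology.toContinuousAdd ℝ Cl21
instance : T2Space Cl21 := by
  constructor
  intro x y hxy
  obtain ⟨φ, hφ⟩ : ∃ φ : Module.Dual ℝ Cl21, φ x ≠ φ y := by
    by_contra h
    push_neg at h
    apply hxy
    rw [← sub_eq_zero, ← Module.forall_dual_apply_eq_zero_iff ℝ (x - y)]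
    intro f
    simp [h f]
  exact separated_by_continuous (IsModuleTopology.continuous_of_linearMap φ) hφ

lemma hasSum_exp_div (x : ℝ) : HasSum (fun n : ℕ => x ^ n / n.factorial) (Real.exp x) := by
  have h := (Real.summable_pow_div_factorial x).hasSum
  rwa [show ∑' n : ℕ, x ^ n / n.factorial = Real.exp x by
    rw [Real.exp_eq_exp_ℝ, NormedSpace.exp_eq_tsum_div]] at h

section table
variable {J F : Cl21} {s' w' : ℝ}

lemma tbl (hJ : J * J = 1) (hJF : J * F = F * J) (hFF : F * F = s' • 1 + w' • J) :
    let G : Cl21 := (1/2 : ℝ) • (1 + J)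
    let G' : Cl21 := (1/2 : ℝ) • (1 - J)
    let H : Cl21 := (1/2 : ℝ) • ((1 + J) * F)
    let H' : Cl21 := (1/2 : ℝ) • ((1 - J) * F)
    G + G' = 1 ∧ G * G = G ∧ G' * G' = G' ∧ G * G' = 0 ∧ G' * G = 0 ∧
    G * H = H ∧ H * G = H ∧ G' * H' = H' ∧ H' * G' = H' ∧
    G * H' = 0 ∧ H' * G = 0 ∧ G' * H = 0 ∧ H * G' = 0 ∧
    H * H = (s' + w') • G ∧ H' * H' = (s' - w') • G' ∧ H * H' = 0 ∧ H' * H = 0 := by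
  intro G G' H H'
  have hJ' : ∀ x : Cl21, J * (J * x) = x := fun x => by rw [← mul_assoc, hJ, one_mul]
  have hFJ : F * J = J * F := hJF.symm
  have hFJ' : ∀ x : Cl21, F * (J * x) = J * (F * x) := fun x => by
    rw [← mul_assoc, hFJ, mul_assoc]
  have hFF' : ∀ x : Cl21, F * (F * x) = s' • x + w' • (J * x) := fun x => by
    rw [← mul_assoc, hFF, add_mul, smul_mul_assoc, smul_mul_assoc, one_mul]
  refine ⟨?_, ?_, ?_, ?_, ?_, ?_, ?_, ?_, ?_, ?_, ?_, ?_, ?_, ?_, ?_, ?_, ?_⟩ <;>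
    simp only [G, G', H, H', smul_mul_assoc, mul_smul_comm, smul_smul, mul_add, add_mul,
      sub_mul, mul_sub, mul_assoc, mul_one, one_mul, smul_add, smul_sub,
      hJ, hJ', hFJ, hFJ', hFF, hFF'] <;>
    module
end table

lemma powL (y1 y2 z1 z2 c d : ℝ) (hc : c ≠ 0) (hd : d ≠ 0) {G G' H H' : Cl21}
    (h1 : G + G' = 1)
    (hGG : G * G = G) (hG'G' : G' * G' = G') (hGG' : G * G' = 0) (hG'G : G' * G = 0)
    (hGH : G * H = H) (hHG : H * G = H) (hG'H' : G' * H' = H') (hH'G' : H' * G' = H')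
    (hGH' : G * H' = 0) (hH'G : H' * G = 0) (hG'H : G' * H = 0) (hHG' : H * G' = 0)
    (hHH : H * H = (c ^ 2) • G) (hH'H' : H' * H' = (d ^ 2) • G')
    (hHH' : H * H' = 0) (hH'H : H' * H = 0) :
    ∀ n : ℕ,
      (((y1 + y2) / 2) • G + ((y1 - y2) / (2 * c)) • H +
        ((z1 + z2) / 2) • G' + ((z1 - z2) / (2 * d)) • H') ^ n =
      ((y1 ^ n + y2 ^ n) / 2) • G + ((y1 ^ n - y2 ^ n) / (2 * c)) • H +
        ((z1 ^ n + z2 ^ n) / 2) • G' + ((z1 ^ n - z2 ^ n) / (2 * d)) • H' := by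
  intro n
  induction n with
  | zero => simp only [pow_zero]; rw [← h1]; match_scalars <;> ring
  | succ n ih =>
      rw [pow_succ, ih]
      simp only [add_mul, mul_add, smul_mul_assoc, mul_smul_comm, smul_smul,
        hGG, hG'G', hGG', hG'G, hGH, hHG, hG'H', hH'G', hGH', hH'G, hG'H, hHG',
        hHH, hHH', hH'H, hH'H', smul_zero, add_zero, zero_add]
      match_scalars <;> field_simp <;> ring



lemma expCl_L (y1 y2 z1 z2 c d : ℝ) (hc : c ≠ 0) (hd : d ≠ 0) {G G' H H' : Cl21}
    (h1 : G + G' = 1)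
    (hGG : G * G = G) (hG'G' : G' * G' = G') (hGG' : G * G' = 0) (hG'G : G' * G = 0)
    (hGH : G * H = H) (hHG : H * G = H) (hG'H' : G' * H' = H') (hH'G' : H' * G' = H')
    (hGH' : G * H' = 0) (hH'G : H' * G = 0) (hG'H : G' * H = 0) (hHG' : H * G' = 0)
    (hHH : H * H = (c ^ 2) • G) (hH'H' : H' * H' = (d ^ 2) • G')
    (hHH' : H * H' = 0) (hH'H : H' * H = 0) :
    expCl (((y1 + y2) / 2) • G + ((y1 - y2) / (2 * c)) • H +
        ((z1 + z2) / 2) • G' + ((z1 - z2) / (2 * d)) • H') =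
      ((Real.exp y1 + Real.exp y2) / 2) • G + ((Real.exp y1 - Real.exp y2) / (2 * c)) • H +
        ((Real.exp z1 + Real.exp z2) / 2) • G' + ((Real.exp z1 - Real.exp z2) / (2 * d)) • H' := by
  have hs1 := ((hasSum_exp_div y1).add (hasSum_exp_div y2)).div_const 2
  have hs2 := ((hasSum_exp_div y1).sub (hasSum_exp_div y2)).div_const (2 * c)
  have hs3 := ((hasSum_exp_div z1).add (hasSum_exp_div z2)).div_const 2
  have hs4 := ((hasSum_exp_div z1).sub (hasSum_exp_div z2)).div_const (2 * d)
  have htot := (((hs1.smul_const G).add (hs2.smul_const H)).add (hs3.smul_const G')).add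
    (hs4.smul_const H')
  rw [expCl]
  have hfun : (fun n : ℕ => (n.factorial : ℝ)⁻¹ •
      (((y1 + y2) / 2) • G + ((y1 - y2) / (2 * c)) • H +
        ((z1 + z2) / 2) • G' + ((z1 - z2) / (2 * d)) • H') ^ n) =
      fun n : ℕ =>
        ((y1 ^ n / n.factorial + y2 ^ n / n.factorial) / 2) • G +
          ((y1 ^ n / n.factorial - y2 ^ n / n.factorial) / (2 * c)) • H +
          ((z1 ^ n / n.factorial + z2 ^ n / n.factorial) / 2) • G' +
          ((z1 ^ n / n.factorial - z2 ^ n / n.factorial) / (2 * d)) • H' := by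
    funext n
    rw [powL y1 y2 z1 z2 c d hc hd h1 hGG hG'G' hGG' hG'G hGH hHG hG'H' hH'G' hGH' hH'G
      hG'H hHG' hHH hH'H' hHH' hH'H n]
    match_scalars <;> ring
  rw [hfun]
  exact htot.tsum_eq

/-- the (`a₊⁽²⁾ < 0`, `a₋⁽²⁾ < 0`) logarithm formula in Cl(2,1)
exponentiates back to `A`. -/
theorem exp_hyperbolicLog_Cl21
    (a0 a1 a2 a3 a12 a13 a23 a123 s w a2p a2m : ℝ)
    (va bA A A0p A0m A12p A12m L : Cl21)
    (hva : va = a1 • e 0 + a2 • e 1 + a3 • e 2)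
    (hbA : bA = a12 • (e 0 * e 1) + a13 • (e 0 * e 2) + a23 • (e 1 * e 2))
    (hA : A = algebraMap ℝ Cl21 a0 + va + bA + a123 • I3)
    (hs : s = a1 ^ 2 + a2 ^ 2 - a3 ^ 2 - a12 ^ 2 + a13 ^ 2 + a23 ^ 2)
    (hw : w = a1 * a23 - a2 * a13 + a3 * a12)
    (ha2p : a2p = -s - 2 * w) (ha2m : a2m = -s + 2 * w)
    (ha2pneg : a2p < 0) (ha2mneg : a2m < 0)
    (hgtp : Real.sqrt (-a2p) < a0 + a123) (hgtm : Real.sqrt (-a2m) < a0 - a123)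
    (hA0p : A0p = algebraMap ℝ Cl21 ((1 / 2) *
      (Real.log (a0 + a123 + Real.sqrt (-a2p)) + Real.log (a0 + a123 - Real.sqrt (-a2p)))))
    (hA0m : A0m = algebraMap ℝ Cl21 ((1 / 2) *
      (Real.log (a0 - a123 + Real.sqrt (-a2m)) + Real.log (a0 - a123 - Real.sqrt (-a2m)))))
    (hA12p : A12p = (_root_.artanh (Real.sqrt (-a2p) / (a0 + a123)) / Real.sqrt (-a2p)) •
      ((1 + I3) * (va + bA)))
    (hA12m : A12m = (_root_.artanh (Real.sqrt (-a2m) / (a0 - a123)) / Real.sqrt (-a2m)) •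
      ((1 - I3) * (va + bA)))
    (hL : L = (1 / 2 : ℝ) • (A0p + A0m + A12p + A12m + (A0p - A0m) * I3)) :
    expCl L = A := by
  set c := Real.sqrt (-a2p) with hcdef
  set d := Real.sqrt (-a2m) with hddef
  have hcpos : 0 < c := Real.sqrt_pos.2 (by linarith)
  have hdpos : 0 < d := Real.sqrt_pos.2 (by linarith)
  have hc2 : c ^ 2 = s + 2 * w := by rw [hcdef, Real.sq_sqrt (by linarith)]; linarith
  have hd2 : d ^ 2 = s - 2 * w := by rw [hddef, Real.sq_sqrt (by linarith)]; linarith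
  have hc0 : c ≠ 0 := ne_of_gt hcpos
  have hd0 : d ≠ 0 := ne_of_gt hdpos
  have hbp : 0 < a0 + a123 := lt_trans hcpos hgtp
  have hbm : 0 < a0 - a123 := lt_trans hdpos hgtm
  have hbpc : 0 < a0 + a123 - c := by linarith
  have hbmc : 0 < a0 - a123 - d := by linarith
  have hbpc' : 0 < a0 + a123 + c := by linarith
  have hbmc' : 0 < a0 - a123 + d := by linarith
  -- the J/F structure
  have hJ : I3 * I3 = 1 := I3sq
  have hJF : I3 * (va + bA) = (va + bA) * I3 := by rw [hva, hbA]; exact I3F _ _ _ _ _ _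
  have hFF : (va + bA) * (va + bA) = s • (1 : Cl21) + (2 * w) • I3 := by
    rw [hva, hbA, FF, hs, hw]
  obtain ⟨h1, hGG, hG'G', hGG', hG'G, hGH, hHG, hG'H', hH'G', hGH', hH'G, hG'H, hHG',
    hHH, hH'H', hHH', hH'H⟩ := tbl hJ hJF hFF
  rw [show s + 2 * w = c ^ 2 by linarith] at hHH
  rw [show s - 2 * w = d ^ 2 by linarith] at hH'H'
  -- artanh identities
  have hart_p : _root_.artanh (c / (a0 + a123)) =
      (Real.log (a0 + a123 + c) - Real.log (a0 + a123 - c)) / 2 := by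
    rw [_root_.artanh, show (1 + c / (a0 + a123)) / (1 - c / (a0 + a123)) =
        (a0 + a123 + c) / (a0 + a123 - c) by field_simp,
      Real.log_div (by positivity) (by positivity)]
    ring
  have hart_m : _root_.artanh (d / (a0 - a123)) =
      (Real.log (a0 - a123 + d) - Real.log (a0 - a123 - d)) / 2 := by
    rw [_root_.artanh, show (1 + d / (a0 - a123)) / (1 - d / (a0 - a123)) =
        (a0 - a123 + d) / (a0 - a123 - d) by field_simp,
      Real.log_div (by positivity) (by positivity)]
    ring
  -- L in canonical form
  set y1 := Real.log (a0 + a123 + c)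
  set y2 := Real.log (a0 + a123 - c)
  set z1 := Real.log (a0 - a123 + d)
  set z2 := Real.log (a0 - a123 - d)
  have hLc : L = ((y1 + y2) / 2) • ((1/2 : ℝ) • (1 + I3)) +
      ((y1 - y2) / (2 * c)) • ((1/2 : ℝ) • ((1 + I3) * (va + bA))) +
      ((z1 + z2) / 2) • ((1/2 : ℝ) • (1 - I3)) +
      ((z1 - z2) / (2 * d)) • ((1/2 : ℝ) • ((1 - I3) * (va + bA))) := by
    rw [hL, hA0p, hA0m, hA12p, hA12m, hart_p, hart_m,
      Algebra.algebraMap_eq_smul_one, Algebra.algebraMap_eq_smul_one]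
    simp only [sub_mul, smul_mul_assoc, one_mul, smul_add, smul_sub, smul_smul, mul_one]
    match_scalars
    all_goals try ring
    all_goals field_simp
    all_goals try ring
    all_goals tauto
  rw [hLc, expCl_L y1 y2 z1 z2 c d (ne_of_gt hcpos) (ne_of_gt hdpos) h1 hGG hG'G' hGG' hG'G
    hGH hHG hG'H' hH'G' hGH' hH'G hG'H hHG' hHH hH'H' hHH' hH'H]
  rw [hA, Algebra.algebraMap_eq_smul_one]
  rw [show Real.exp y1 = a0 + a123 + c from Real.exp_log hbpc',
    show Real.exp y2 = a0 + a123 - c from Real.exp_log hbpc,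
    show Real.exp z1 = a0 - a123 + d from Real.exp_log hbmc',
    show Real.exp z2 = a0 - a123 - d from Real.exp_log hbmc]
  simp only [add_mul, sub_mul, mul_add, one_mul, smul_add, smul_sub, smul_smul]
  match_scalars
  all_goals try ring
  all_goals field_simp
  all_goals norm_num
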